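/- arXiv:1306.3025 — 2 statements merged into one kernel-verified Lean document; each statement's English description precedes it below -/
import Mathlib

section
/- Let V_1, V_2 be finite abelian groups and ν_e : V_1 × V_2 → ℝ≥0, ν_1 : V_1 → ℝ≥0, ν_2 : V_2 → ℝ≥0 weight functions. For F, G : V_1 × V_2 → ℝ define the weighted Gowers inner product ⟨F_00, F_01, F_10, F_11⟩ = E_{x_0,q_0 ∈ V_1} E_{x_1,q_1 ∈ V_2} F_00(x_0,x_1) F_01(x_0,q_1) F_10(q_0,x_1) F_11(q_0,q_1) · ν_e(x_0,x_1)ν_e(x_0,q_1)ν_e(q_0,x_1)ν_e(q_0,q_1) · ν_1(x_0)ν_1(q_0)ν_2(x_1)ν_2(q_1), and ‖F‖^4 = ⟨F,F,F,F⟩. Then |⟨F_00, F_01, F_10, F_11⟩| ≤ ‖F_00‖ ‖F_01‖ ‖F_10‖ ‖F_11‖ (the Gowers–Cauchy–Schwarz inequality for the weighted 2-dimensional box norm). -/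
/-- Weighted 2-dimensional Gowers inner product with edge weight `νe` and
vertex weights `ν1`, `ν2` (an average over `x₀,q₀ ∈ V₁`, `x₁,q₁ ∈ V₂`). -/
noncomputable def GIP {V1 V2 : Type*} [Fintype V1] [Fintype V2]
    (νe : V1 → V2 → ℝ) (ν1 : V1 → ℝ) (ν2 : V2 → ℝ)
    (F00 F01 F10 F11 : V1 → V2 → ℝ) : ℝ :=
  (∑ x0, ∑ q0, ∑ x1, ∑ q1,
      F00 x0 x1 * F01 x0 q1 * F10 q0 x1 * F11 q0 q1 *
      (νe x0 x1 * νe x0 q1 * νe q0 x1 * νe q0 q1) *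
      (ν1 x0 * ν1 q0 * ν2 x1 * ν2 q1)) /
    ((Fintype.card V1 : ℝ) ^ 2 * (Fintype.card V2 : ℝ) ^ 2)

/-- The weighted 2-dimensional box norm: nonnegative fourth root of the
Gowers inner product of `F` with itself. -/
noncomputable def boxNorm {V1 V2 : Type*} [Fintype V1] [Fintype V2]
    (νe : V1 → V2 → ℝ) (ν1 : V1 → ℝ) (ν2 : V2 → ℝ) (F : V1 → V2 → ℝ) : ℝ :=
  (GIP νe ν1 ν2 F F F F) ^ ((1 : ℝ) / 4)

/-!
The edge weight only ever appears next to `F`, so it can be absorbed into `F`. Fixing the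
`V₁` variables `x, q`, the inner product is then `∑ ν₁ x ν₁ q · C(F₀₀, F₁₀) · C(F₀₁, F₁₁)` with
`C(F, G)(x, q) = ∑_y ν₂ y F(x, y) G(q, y)`, and Cauchy–Schwarz in `(x, q)` gives
`⟨F₀₀, F₀₁, F₁₀, F₁₁⟩² ≤ ⟨F₀₀, F₀₀, F₁₀, F₁₀⟩ ⟨F₀₁, F₀₁, F₁₁, F₁₁⟩`; the same expression shows
`⟨F, F, G, G⟩ ≥ 0`. Transposing `V₁ × V₂` exchanges the roles of the two coordinates, so the
same inequality gives `⟨F, F, G, G⟩² ≤ ‖F‖⁴ ‖G‖⁴`, and the two estimates combine to the claim.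
-/

open Finset Function

lemma Finset.sum_weighted_mul_sq_le {ι : Type*} (s : Finset ι) {w : ι → ℝ}
    (hw : ∀ i ∈ s, 0 ≤ w i) (f g : ι → ℝ) :
    (∑ i ∈ s, w i * (f i * g i)) ^ 2 ≤ (∑ i ∈ s, w i * f i ^ 2) * ∑ i ∈ s, w i * g i ^ 2 :=
  sum_sq_le_sum_mul_sum_of_sq_le_mul s (fun i hi => mul_nonneg (hw i hi) (sq_nonneg _))
    (fun i hi => mul_nonneg (hw i hi) (sq_nonneg _)) fun i _ => le_of_eq (by ring)

lemma abs_le_rpow_mul_of_sq_le_mul {s a b p q r t : ℝ} (hp : 0 ≤ p) (hq : 0 ≤ q)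
    (hr : 0 ≤ r) (ht : 0 ≤ t) (hs : s ^ 2 ≤ a * b) (ha : a ^ 2 ≤ p * r)
    (hb : b ^ 2 ≤ q * t) :
    |s| ≤ p ^ ((1 : ℝ) / 4) * q ^ ((1 : ℝ) / 4) * r ^ ((1 : ℝ) / 4) * t ^ ((1 : ℝ) / 4) := by
  have h4 : |s| ^ 4 ≤ p * q * r * t :=
    calc |s| ^ 4 = (s ^ 2) ^ 2 := by rw [pow_abs, abs_of_nonneg (by positivity)]; ring
      _ ≤ (a * b) ^ 2 := pow_le_pow_left₀ (sq_nonneg s) hs 2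
      _ = a ^ 2 * b ^ 2 := mul_pow a b 2
      _ ≤ (p * r) * (q * t) := mul_le_mul ha hb (sq_nonneg b) (mul_nonneg hp hr)
      _ = p * q * r * t := by ring
  rw [← Real.mul_rpow hp hq, ← Real.mul_rpow (by positivity) hr,
    ← Real.mul_rpow (by positivity) ht, one_div,
    Real.le_rpow_inv_iff_of_pos (abs_nonneg s) (by positivity) (by norm_num)]
  exact_mod_cast h4

section GowersCauchySchwarz

variable {V1 V2 : Type*} [Fintype V1] [Fintype V2]
  (νe : V1 → V2 → ℝ) (ν1 : V1 → ℝ) (ν2 : V2 → ℝ)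

noncomputable def sliceCorr (F G : V1 → V2 → ℝ) (x q : V1) : ℝ :=
  ∑ y, ν2 y * (νe x y * F x y) * (νe q y * G q y)

lemma GIP_eq_sum_sliceCorr (F00 F01 F10 F11 : V1 → V2 → ℝ) :
    GIP νe ν1 ν2 F00 F01 F10 F11 =
      (∑ x, ∑ q, ν1 x * ν1 q *
        (sliceCorr νe ν2 F00 F10 x q * sliceCorr νe ν2 F01 F11 x q)) /
      ((Fintype.card V1 : ℝ) ^ 2 * (Fintype.card V2 : ℝ) ^ 2) := by
  unfold GIP sliceCorr
  congr 1
  refine sum_congr rfl fun x0 _ => sum_congr rfl fun q0 _ => ?_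
  rw [sum_mul_sum, mul_sum]
  refine sum_congr rfl fun x1 _ => ?_
  rw [mul_sum]
  exact sum_congr rfl fun q1 _ => by ring

lemma GIP_eq_GIP_swap (F00 F01 F10 F11 : V1 → V2 → ℝ) :
    GIP νe ν1 ν2 F00 F01 F10 F11 =
      GIP (swap νe) ν2 ν1 (swap F00) (swap F10) (swap F01) (swap F11) := by
  unfold GIP
  rw [mul_comm ((Fintype.card V1 : ℝ) ^ 2)]
  congr 1
  rw [sum_comm_cycle]
  refine sum_congr rfl fun x1 _ => ?_
  rw [sum_comm_cycle]
  exact sum_congr rfl fun q1 _ => sum_congr rfl fun x0 _ => sum_congr rfl fun q0 _ => by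
    simp only [swap]; ring

variable {ν1} in
lemma GIP_sq_le (hν1 : ∀ x, 0 ≤ ν1 x) (F00 F01 F10 F11 : V1 → V2 → ℝ) :
    GIP νe ν1 ν2 F00 F01 F10 F11 ^ 2 ≤
      GIP νe ν1 ν2 F00 F00 F10 F10 * GIP νe ν1 ν2 F01 F01 F11 F11 := by
  simp only [GIP_eq_sum_sliceCorr, div_pow, div_mul_div_comm, ← sq]
  gcongr
  simpa only [sum_product, sq] using sum_weighted_mul_sq_le (univ ×ˢ univ)
    (w := fun p => ν1 p.1 * ν1 p.2) (fun p _ => mul_nonneg (hν1 p.1) (hν1 p.2))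
    (fun p => sliceCorr νe ν2 F00 F10 p.1 p.2) (fun p => sliceCorr νe ν2 F01 F11 p.1 p.2)

variable {ν1} in
lemma GIP_pair_pair_nonneg (hν1 : ∀ x, 0 ≤ ν1 x) (F G : V1 → V2 → ℝ) :
    0 ≤ GIP νe ν1 ν2 F F G G := by
  rw [GIP_eq_sum_sliceCorr]
  refine div_nonneg (sum_nonneg fun x _ => sum_nonneg fun q _ => ?_) (by positivity)
  exact mul_nonneg (mul_nonneg (hν1 x) (hν1 q)) (mul_self_nonneg _)

variable {ν2} in
lemma GIP_pair_pair_sq_le (hν2 : ∀ y, 0 ≤ ν2 y) (F G : V1 → V2 → ℝ) :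
    GIP νe ν1 ν2 F F G G ^ 2 ≤ GIP νe ν1 ν2 F F F F * GIP νe ν1 ν2 G G G G := by
  simpa only [← GIP_eq_GIP_swap] using
    GIP_sq_le (swap νe) ν1 hν2 (swap F) (swap G) (swap F) (swap G)

end GowersCauchySchwarz

theorem stmt_9_general {V1 V2 : Type*} [Fintype V1] [Fintype V2]
    (νe : V1 → V2 → ℝ) (ν1 : V1 → ℝ) (ν2 : V2 → ℝ)
    (hν1 : ∀ x, 0 ≤ ν1 x) (hν2 : ∀ y, 0 ≤ ν2 y)
    (F00 F01 F10 F11 : V1 → V2 → ℝ) :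
    |GIP νe ν1 ν2 F00 F01 F10 F11| ≤
      boxNorm νe ν1 ν2 F00 * boxNorm νe ν1 ν2 F01 *
        boxNorm νe ν1 ν2 F10 * boxNorm νe ν1 ν2 F11 :=
  have hnorm (F : V1 → V2 → ℝ) : 0 ≤ GIP νe ν1 ν2 F F F F :=
    GIP_pair_pair_nonneg νe ν2 hν1 F F
  abs_le_rpow_mul_of_sq_le_mul (hnorm F00) (hnorm F01) (hnorm F10) (hnorm F11)
    (GIP_sq_le νe ν2 hν1 F00 F01 F10 F11) (GIP_pair_pair_sq_le νe ν1 hν2 F00 F10)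
    (GIP_pair_pair_sq_le νe ν1 hν2 F01 F11)

theorem stmt_9 {V1 V2 : Type*} [Fintype V1] [Fintype V2] [Nonempty V1] [Nonempty V2]
    (νe : V1 → V2 → ℝ) (ν1 : V1 → ℝ) (ν2 : V2 → ℝ)
    (hνe : ∀ x y, 0 ≤ νe x y) (hν1 : ∀ x, 0 ≤ ν1 x) (hν2 : ∀ y, 0 ≤ ν2 y)
    (F00 F01 F10 F11 : V1 → V2 → ℝ)
    (h00 : 0 ≤ GIP νe ν1 ν2 F00 F00 F00 F00)
    (h01 : 0 ≤ GIP νe ν1 ν2 F01 F01 F01 F01)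
    (h10 : 0 ≤ GIP νe ν1 ν2 F10 F10 F10 F10)
    (h11 : 0 ≤ GIP νe ν1 ν2 F11 F11 F11 F11) :
    |GIP νe ν1 ν2 F00 F01 F10 F11| ≤
      boxNorm νe ν1 ν2 F00 * boxNorm νe ν1 ν2 F01 *
        boxNorm νe ν1 ν2 F10 * boxNorm νe ν1 ν2 F11 :=
  stmt_9_general νe ν1 ν2 hν1 hν2 F00 F01 F10 F11
end

section
/- Let m be a positive integer and let μ_i(q_1), μ_i(q_2), a_i(q_1), a_i(q_2) (1 ≤ i ≤ m) be real numbers in [0,1] with a_i(q_j) ≤ μ_i(q_j). Suppose ε := Σ_{i=1}^m (|a_i(q_2) − a_i(q_1)| + |μ_i(q_2) − μ_i(q_1)|) ≤ 1. Define r_i(q_j) = a_i(q_j)/μ_i(q_j) if μ_i(q_j) > 0 and r_i(q_j) = 1 otherwise. Then Σ_{i=1}^m (r_i(q_2) − r_i(q_1))^2 μ_i(q_2) ≤ 15 m ε^{1/4}. -/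
/-!
Each summand is at most its own contribution `|a₂ - a₁| + |μ₂ - μ₁|` to `ε`: since the
ratios lie in `[0, 1]`, `(r₂ - r₁)² μ₂ ≤ |r₂ - r₁| μ₂ = |a₂ - r₁ μ₂|`, and `a₁ = r₁ μ₁` turns
`a₂ - r₁ μ₂` into `(a₂ - a₁) + r₁ (μ₁ - μ₂)`. Hence the whole sum is at most `ε`, and
`ε ≤ ε ^ (1/4)` because `ε ≤ 1`.
-/

open Set

/-- The ratio `r = a / μ` of the paper, set to `1` on a cell of mass `0`. -/
noncomputable def condRatio (a μ : ℝ) : ℝ := if 0 < μ then a / μ else 1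

section condRatio

variable {a μ a₁ μ₁ a₂ μ₂ : ℝ}

lemma condRatio_mem_Icc (ha : a ∈ Icc 0 μ) : condRatio a μ ∈ Icc 0 1 := by
  unfold condRatio
  split_ifs with hμ
  · exact ⟨div_nonneg ha.1 hμ.le, div_le_one_of_le₀ ha.2 hμ.le⟩
  · exact ⟨zero_le_one, le_rfl⟩

lemma condRatio_mul_self (ha : a ∈ Icc 0 μ) : condRatio a μ * μ = a := by
  unfold condRatio
  split_ifs with hμ
  · exact div_mul_cancel₀ a hμ.ne'
  · have hμ0 : μ = 0 := le_antisymm (not_lt.mp hμ) (ha.1.trans ha.2)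
    have ha0 : a = 0 := le_antisymm (hμ0 ▸ ha.2) ha.1
    simp [hμ0, ha0]

lemma sq_sub_condRatio_mul_le (ha₁ : a₁ ∈ Icc 0 μ₁) (ha₂ : a₂ ∈ Icc 0 μ₂) :
    (condRatio a₂ μ₂ - condRatio a₁ μ₁) ^ 2 * μ₂ ≤ |a₂ - a₁| + |μ₂ - μ₁| := by
  set r₁ := condRatio a₁ μ₁
  set r₂ := condRatio a₂ μ₂
  have hr₁ : r₁ ∈ Icc 0 1 := condRatio_mem_Icc ha₁
  have hr₂ : r₂ ∈ Icc 0 1 := condRatio_mem_Icc ha₂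
  have hμ₂ : 0 ≤ μ₂ := ha₂.1.trans ha₂.2
  have hdiff : |r₂ - r₁| ≤ 1 := abs_sub_le_of_nonneg_of_le hr₂.1 hr₂.2 hr₁.1 hr₁.2
  have hsplit : (r₂ - r₁) * μ₂ = (a₂ - a₁) + r₁ * (μ₁ - μ₂) := by
    rw [← condRatio_mul_self ha₁, ← condRatio_mul_self ha₂]
    ring
  calc (r₂ - r₁) ^ 2 * μ₂ = |r₂ - r₁| * |r₂ - r₁| * μ₂ := by rw [← sq, sq_abs]
    _ ≤ 1 * |r₂ - r₁| * μ₂ := by gcongr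
    _ = |a₂ - a₁ + r₁ * (μ₁ - μ₂)| := by rw [one_mul, ← hsplit, abs_mul, abs_of_nonneg hμ₂]
    _ ≤ |a₂ - a₁| + |r₁ * (μ₁ - μ₂)| := abs_add_le _ _
    _ = |a₂ - a₁| + r₁ * |μ₂ - μ₁| := by rw [abs_mul, abs_of_nonneg hr₁.1, abs_sub_comm μ₁]
    _ ≤ |a₂ - a₁| + |μ₂ - μ₁| := by
      gcongr
      exact mul_le_of_le_one_left (abs_nonneg _) hr₁.2

end condRatio

lemma sum_sq_sub_condRatio_mul_le {ι : Type*} (s : Finset ι) {μ₁ μ₂ a₁ a₂ : ι → ℝ}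
    (ha₁ : ∀ i, a₁ i ∈ Icc 0 (μ₁ i)) (ha₂ : ∀ i, a₂ i ∈ Icc 0 (μ₂ i)) :
    ∑ i ∈ s, (condRatio (a₂ i) (μ₂ i) - condRatio (a₁ i) (μ₁ i)) ^ 2 * μ₂ i ≤
      ∑ i ∈ s, (|a₂ i - a₁ i| + |μ₂ i - μ₁ i|) :=
  Finset.sum_le_sum fun i _ ↦ sq_sub_condRatio_mul_le (ha₁ i) (ha₂ i)

theorem stmt_12_general {m : ℕ} (hm : 1 ≤ m)
    (μ1 μ2 a1 a2 : Fin m → ℝ)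
    (ha1 : ∀ i, a1 i ∈ Set.Icc (0 : ℝ) (μ1 i)) (ha2 : ∀ i, a2 i ∈ Set.Icc (0 : ℝ) (μ2 i))
    (hε : (∑ i, (|a2 i - a1 i| + |μ2 i - μ1 i|)) ≤ 1) :
    (∑ i, ((if 0 < μ2 i then a2 i / μ2 i else 1) -
        (if 0 < μ1 i then a1 i / μ1 i else 1)) ^ 2 * μ2 i) ≤
      15 * m * (∑ i, (|a2 i - a1 i| + |μ2 i - μ1 i|)) ^ ((1 : ℝ) / 4) := by
  set ε := ∑ i, (|a2 i - a1 i| + |μ2 i - μ1 i|)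
  have hε0 : 0 ≤ ε := Finset.sum_nonneg fun i _ ↦ by positivity
  have hm15 : (1 : ℝ) ≤ 15 * m := by
    have : (1 : ℝ) ≤ m := by exact_mod_cast hm
    linarith
  calc _ ≤ ε := sum_sq_sub_condRatio_mul_le Finset.univ ha1 ha2
    _ ≤ ε ^ ((1 : ℝ) / 4) := Real.self_le_rpow_of_le_one hε0 hε (by norm_num)
    _ ≤ 15 * m * ε ^ ((1 : ℝ) / 4) := le_mul_of_one_le_left (by positivity) hm15

theorem stmt_12 {m : ℕ} (hm : 1 ≤ m)
    (μ1 μ2 a1 a2 : Fin m → ℝ)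
    (hμ1 : ∀ i, μ1 i ∈ Set.Icc (0 : ℝ) 1) (hμ2 : ∀ i, μ2 i ∈ Set.Icc (0 : ℝ) 1)
    (ha1 : ∀ i, a1 i ∈ Set.Icc (0 : ℝ) (μ1 i)) (ha2 : ∀ i, a2 i ∈ Set.Icc (0 : ℝ) (μ2 i))
    (hε : (∑ i, (|a2 i - a1 i| + |μ2 i - μ1 i|)) ≤ 1) :
    (∑ i, ((if 0 < μ2 i then a2 i / μ2 i else 1) -
        (if 0 < μ1 i then a1 i / μ1 i else 1)) ^ 2 * μ2 i) ≤
      15 * m * (∑ i, (|a2 i - a1 i| + |μ2 i - μ1 i|)) ^ ((1 : ℝ) / 4) :=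
  stmt_12_general hm μ1 μ2 a1 a2 ha1 ha2 hε
end
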